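/- Let M ≥ 0 and m ≥ 1 be integers, and let 𝒮(2m, M) be the set of subsets S ⊆ {1, …, M} of size 2m of the form S = (a₁, b₁] ⊔ ⋯ ⊔ (a_l, b_l] where l ≥ 1 and a₁, b₁, …, a_l, b_l are even integers with 0 ≤ a₁ < b₁ < a₂ < b₂ < ⋯ < a_l < b_l ≤ M; for such S define w(S) := (1/2)·Σ_{i=1}^{l} (a_i + b_i) ∈ ℤ_{>0}. Then in the polynomial ring ℤ[t]: Σ_{S ∈ 𝒮(2m, M)} t^{w(S)} = t^m · [⌊M/2⌋ choose m]_{t²}. (Moreover, no subset of odd size is a disjoint union of such intervals, i.e., 𝒮(k, M) = ∅ for odd k.) -/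
import Mathlib


noncomputable section

/-- The field `ℚ(t)` of rational functions (the identity is an identity of
polynomials in `ℤ[t]`, viewed inside `ℚ(t)`). -/
abbrev K : Type := RatFunc ℚ

/-- The indeterminate `t`. -/
def Xq : K := RatFunc.X

/-- `(n)_t = ∏_{i=1}^n (t^i − 1)`. -/
def qfact (t : K) (n : ℕ) : K := ∏ i ∈ Finset.range n, (t ^ (i + 1) - 1)

/-- The Gaussian binomial `[n choose m]_t` (with value `0` out of range). -/
def qbinomN (t : K) (n m : ℕ) : K :=
  if m ≤ n then qfact t n / (qfact t m * qfact t (n - m)) else 0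

/-- `S ∈ 𝒮(·, M)`: `S ⊆ {1,…,M}` is a disjoint union of intervals `(a, b]` with
`a < b` even and separated as in the statement.  Equivalently (and this is the form
used here): `S ⊆ {1,…,M}`, every maximal run of `S` starts at an odd number (i.e.
if `s ∈ S` and `s − 1 ∉ S` then `s` is odd) and ends at an even number (i.e. if
`s ∈ S` and `s + 1 ∉ S` then `s` is even). -/
def goodSet (M : ℕ) (S : Finset ℕ) : Prop :=
  S ⊆ Finset.Icc 1 M ∧
  (∀ s ∈ S, s - 1 ∉ S → Odd s) ∧
  (∀ s ∈ S, s + 1 ∉ S → Even s)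

/-- The weight `w(S) = (1/2)·Σᵢ (aᵢ + bᵢ)` of `S = (a₁,b₁] ⊔ ⋯ ⊔ (a_l,b_l] ∈ 𝒮`,
computed intrinsically: `w(S) = |S|/2 + Σ_{s ∈ S, s−1 ∉ S} (s − 1)`
(`= Σᵢ aᵢ + Σᵢ (bᵢ − aᵢ)/2`). -/
def wS (S : Finset ℕ) : ℕ :=
  S.card / 2 + ∑ s ∈ S.filter (fun s => s - 1 ∉ S), (s - 1)

lemma qfact_zero (t : K) : qfact t 0 = 1 := Finset.prod_range_zero _

lemma qfact_succ (t : K) (n : ℕ) : qfact t (n+1) = qfact t n * (t^(n+1) - 1) :=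
  Finset.prod_range_succ _ _

lemma qfact_ne_zero (t : K) (ht : ∀ i : ℕ, 1 ≤ i → t ^ i ≠ 1) (n : ℕ) : qfact t n ≠ 0 := by
  induction n with
  | zero => simp [qfact_zero]
  | succ k ih =>
      rw [qfact_succ]
      exact mul_ne_zero ih (sub_ne_zero.mpr (ht (k+1) (by omega)))

lemma qbinom_self (t : K) (ht : ∀ i : ℕ, 1 ≤ i → t ^ i ≠ 1) (n : ℕ) : qbinomN t n n = 1 := by
  rw [qbinomN, if_pos le_rfl, Nat.sub_self, qfact_zero, mul_one,
    div_self (qfact_ne_zero t ht n)]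

lemma qbinom_zero (t : K) (ht : ∀ i : ℕ, 1 ≤ i → t ^ i ≠ 1) (n : ℕ) : qbinomN t n 0 = 1 := by
  rw [qbinomN, if_pos (Nat.zero_le n), Nat.sub_zero, qfact_zero, one_mul,
    div_self (qfact_ne_zero t ht n)]

lemma qbinom_out (t : K) {n m : ℕ} (h : n < m) : qbinomN t n m = 0 := by
  rw [qbinomN, if_neg (by omega)]

lemma gauss_rec (t : K) (ht : ∀ i : ℕ, 1 ≤ i → t ^ i ≠ 1) (n m : ℕ) :
    qbinomN t (n+1) (m+1) =
      qbinomN t n (m+1) + qbinomN t n m + (t^n - 1) * qbinomN t (n-1) m := by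
  match n with
  | 0 =>
      match m with
      | 0 => simp [qbinom_self t ht, qbinom_out t (by omega : (0:ℕ) < 1)]
      | m+1 => simp [qbinom_out t (by omega : 0 < m+1), qbinom_out t (by omega : 0 < m+2),
          qbinom_out t (by omega : 1 < m+2)]
  | k+1 =>
      rcases lt_trichotomy m (k+1) with hlt | heq | hgt
      · -- main case : m ≤ k
        obtain ⟨j, hj⟩ : ∃ j, k = m + j := ⟨k - m, by omega⟩
        subst hj
        have hm0 := qfact_ne_zero t ht m
        have hj0 := qfact_ne_zero t ht j
        have h1 : t^(m+1) - 1 ≠ 0 := sub_ne_zero.mpr (ht (m+1) (by omega))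
        have h2 : t^(j+1) - 1 ≠ 0 := sub_ne_zero.mpr (ht (j+1) (by omega))
        have e0 : qbinomN t (m+j+1+1) (m+1)
            = qfact t (m+j) * (t^(m+j+1) - 1) * (t^(m+1) * t^(j+1) - 1) /
              (qfact t m * (t^(m+1) - 1) * (qfact t j * (t^(j+1) - 1))) := by
          rw [qbinomN, if_pos (by omega), show (m+j+1+1) - (m+1) = j+1 by omega,
            show ((m:ℕ)+j+1+1) = (m+j+1)+1 by omega,
            qfact_succ t (m+j+1), qfact_succ t (m+j), qfact_succ t m, qfact_succ t j,
            show ((m:ℕ)+j+1+1) = (m+1)+(j+1) by omega, pow_add t (m+1) (j+1)]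
        have e1 : qbinomN t (m+j+1) (m+1)
            = qfact t (m+j) * (t^(m+j+1) - 1) / (qfact t m * (t^(m+1) - 1) * qfact t j) := by
          rw [qbinomN, if_pos (by omega), show (m+j+1) - (m+1) = j by omega,
            qfact_succ t (m+j), qfact_succ t m]
        have e2 : qbinomN t (m+j+1) m
            = qfact t (m+j) * (t^(m+j+1) - 1) / (qfact t m * (qfact t j * (t^(j+1) - 1))) := by
          rw [qbinomN, if_pos (by omega), show (m+j+1) - m = j+1 by omega,
            qfact_succ t (m+j), qfact_succ t j]
        have e3 : qbinomN t (m+j) m = qfact t (m+j) / (qfact t m * qfact t j) := by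
          rw [qbinomN, if_pos (by omega), show (m+j) - m = j by omega]
        rw [show ((m:ℕ)+j+1-1) = m+j by omega, e0, e1, e2, e3]
        generalize qfact t (m+j) = F
        generalize qfact t m = A at hm0 ⊢
        generalize qfact t j = B at hj0 ⊢
        generalize t^(m+1) = U at h1 ⊢
        generalize t^(j+1) = V at h2 ⊢
        generalize t^(m+j+1) = W
        have hd1 : A * (U - 1) * B ≠ 0 := by
          exact mul_ne_zero (mul_ne_zero hm0 h1) hj0
        have hd2 : A * (B * (V - 1)) ≠ 0 := mul_ne_zero hm0 (mul_ne_zero hj0 h2)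
        have hd3 : A * B ≠ 0 := mul_ne_zero hm0 hj0
        have hdL : A * (U - 1) * (B * (V - 1)) ≠ 0 :=
          mul_ne_zero (mul_ne_zero hm0 h1) (mul_ne_zero hj0 h2)
        rw [← mul_div_assoc, div_add_div _ _ hd1 hd2,
          div_add_div _ _ (mul_ne_zero hd1 hd2) hd3,
          div_eq_div_iff hdL (mul_ne_zero (mul_ne_zero hd1 hd2) hd3)]
        ring
      · subst heq
        rw [show (k + 1 + 1 : ℕ) = k + 2 by omega,
          qbinom_self t ht, qbinom_out t (by omega : k + 1 < k + 2),
          qbinom_self t ht, qbinom_out t (by omega : k + 1 - 1 < k + 1)]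
        ring
      · rw [qbinom_out t (show k + 1 + 1 < m + 1 by omega),
          qbinom_out t (show k + 1 < m + 1 by omega),
          qbinom_out t (show k + 1 < m by omega),
          qbinom_out t (show k + 1 - 1 < m by omega)]
        ring


open Finset

def vT (T : Finset ℕ) : ℕ := ∑ c ∈ T.filter (fun c => c - 1 ∉ T), (c - 1)

def fS (q : K) (N m : ℕ) : K := ∑ T ∈ (Finset.Icc 1 N).powersetCard m, q ^ vT T

lemma vT_insert (n : ℕ) (T : Finset ℕ) (hT : T ⊆ Finset.Icc 1 n) :
    vT (insert (n+1) T) = vT T + (if n ∈ T then 0 else n) := by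
  classical
  have hnT : n + 1 ∉ T := fun h => by simpa using (Finset.mem_Icc.mp (hT h)).2
  have hmem : ∀ c, c ∈ T → (c - 1 ∉ insert (n+1) T ↔ c - 1 ∉ T) := by
    intro c hc
    have hc2 : c ≤ n := (Finset.mem_Icc.mp (hT hc)).2
    have hc1 : 1 ≤ c := (Finset.mem_Icc.mp (hT hc)).1
    simp only [Finset.mem_insert]
    constructor
    · intro h h'; exact h (Or.inr h')
    · intro h h'; rcases h' with h' | h'
      · omega
      · exact h h'
  have hfil : (insert (n+1) T).filter (fun c => c - 1 ∉ insert (n+1) T)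
      = if n ∈ T then T.filter (fun c => c - 1 ∉ T)
        else insert (n+1) (T.filter (fun c => c - 1 ∉ T)) := by
    rw [Finset.filter_insert]
    have : T.filter (fun c => c - 1 ∉ insert (n+1) T) = T.filter (fun c => c - 1 ∉ T) :=
      Finset.filter_congr (by intro c hc; simpa using hmem c hc)
    rw [this]
    by_cases hn : n ∈ T
    · rw [if_neg, if_pos hn]
      exact fun h => h (by simp only [Nat.add_sub_cancel]; exact Finset.mem_insert_of_mem hn)
    · rw [if_pos, if_neg hn]
      simp only [Nat.add_sub_cancel, Finset.mem_insert]
      push_neg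
      exact ⟨by omega, hn⟩
  rw [vT, hfil]
  by_cases hn : n ∈ T
  · rw [if_pos hn, if_pos hn, add_zero]; rfl
  · rw [if_neg hn, if_neg hn]
    rw [Finset.sum_insert (by
      intro h
      exact absurd (Finset.filter_subset _ _ h) (fun h' => by
        simpa using (Finset.mem_Icc.mp (hT h')).2))]
    simp only [Nat.add_sub_cancel]
    rw [vT]
    omega

lemma Icc_one_succ (n : ℕ) : Finset.Icc 1 (n+1) = insert (n+1) (Finset.Icc 1 n) := by
  ext x; simp only [Finset.mem_Icc, Finset.mem_insert]; omega

lemma fS_rec (q : K) (n m : ℕ) :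
    fS q (n+1) (m+1) = fS q n (m+1) + fS q n m + (q^n - 1) * fS q (n-1) m := by
  classical
  have hni : (n+1) ∉ Finset.Icc 1 n := by simp
  have hpc : ∀ T ∈ (Finset.Icc 1 n).powersetCard m, T ⊆ Finset.Icc 1 n :=
    fun T hT => (Finset.mem_powersetCard.mp hT).1
  have hA : ((Finset.Icc 1 n).powersetCard m).filter (fun T => n ∉ T)
      = (Finset.Icc 1 (n-1)).powersetCard m := by
    ext T
    simp only [Finset.mem_filter, Finset.mem_powersetCard]
    constructor
    · rintro ⟨⟨hsub, hcard⟩, hn⟩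
      refine ⟨fun x hx => ?_, hcard⟩
      have := Finset.mem_Icc.mp (hsub hx)
      have : x ≠ n := fun h => hn (h ▸ hx)
      simp only [Finset.mem_Icc]
      have := Finset.mem_Icc.mp (hsub hx)
      omega
    · rintro ⟨hsub, hcard⟩
      have hn : n ∉ T := fun h => by
        have := Finset.mem_Icc.mp (hsub h); omega
      refine ⟨⟨fun x hx => ?_, hcard⟩, hn⟩
      have := Finset.mem_Icc.mp (hsub hx)
      simp only [Finset.mem_Icc]; omega
  have key : ∑ T ∈ (Finset.Icc 1 n).powersetCard m, q ^ vT (insert (n+1) T)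
      = fS q n m + (q^n - 1) * fS q (n-1) m := by
    calc ∑ T ∈ (Finset.Icc 1 n).powersetCard m, q ^ vT (insert (n+1) T)
        = ∑ T ∈ (Finset.Icc 1 n).powersetCard m, q ^ (vT T + if n ∈ T then 0 else n) := by
          exact Finset.sum_congr rfl (fun T hT => by rw [vT_insert n T (hpc T hT)])
      _ = ∑ T ∈ ((Finset.Icc 1 n).powersetCard m).filter (fun T => n ∈ T), q ^ vT T
          + ∑ T ∈ ((Finset.Icc 1 n).powersetCard m).filter (fun T => n ∉ T),
              q ^ vT T * q ^ n := by
          rw [← Finset.sum_filter_add_sum_filter_not ((Finset.Icc 1 n).powersetCard m)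
            (fun T => n ∈ T)]
          congr 1
          · exact Finset.sum_congr rfl (fun T hT => by
              rw [if_pos (Finset.mem_filter.mp hT).2, add_zero])
          · exact Finset.sum_congr rfl (fun T hT => by
              rw [if_neg (Finset.mem_filter.mp hT).2, pow_add])
      _ = (fS q n m - fS q (n-1) m) + q ^ n * fS q (n-1) m := by
          congr 1
          · have := Finset.sum_filter_add_sum_filter_not ((Finset.Icc 1 n).powersetCard m)
              (fun T => n ∈ T) (fun T => q ^ vT T)
            rw [hA] at this
            have h2 : (fS q (n-1) m : K) = ∑ T ∈ (Finset.Icc 1 (n-1)).powersetCard m, q ^ vT T := rfl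
            rw [fS]
            linear_combination this + h2
          · rw [hA, ← Finset.sum_mul, mul_comm]; rfl
      _ = fS q n m + (q^n - 1) * fS q (n-1) m := by ring
  rw [fS, Icc_one_succ, Finset.powersetCard_succ_insert hni]
  have hnot : ∀ T ∈ (Finset.Icc 1 n).powersetCard m, (n+1) ∉ T :=
    fun T hT h => hni (hpc T hT h)
  have hnot' : ∀ S ∈ (Finset.Icc 1 n).powersetCard (m+1), (n+1) ∉ S :=
    fun S hS h => hni ((Finset.mem_powersetCard.mp hS).1 h)
  rw [Finset.sum_union (by
    rw [Finset.disjoint_left]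
    intro S hS hS'
    obtain ⟨T, hT, rfl⟩ := Finset.mem_image.mp hS'
    exact hnot' _ hS (Finset.mem_insert_self _ _))]
  rw [Finset.sum_image (fun T hT T' hT' h => by
    rw [← Finset.erase_insert (hnot T hT), ← Finset.erase_insert (hnot T' hT'), h])]
  rw [key]
  show fS q n (m+1) + (fS q n m + (q ^ n - 1) * fS q (n - 1) m) = _
  ring

lemma fS_eq (q : K) (hq : ∀ i : ℕ, 1 ≤ i → q ^ i ≠ 1) : ∀ N m : ℕ, fS q N m = qbinomN q N m := by
  intro N
  induction N using Nat.strong_induction_on with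
  | _ N ih =>
    intro m
    match N, m with
    | N, 0 =>
        rw [fS, Finset.powersetCard_zero, Finset.sum_singleton, qbinom_zero q hq]
        norm_num [vT]
    | 0, m+1 =>
        rw [fS, show Finset.Icc 1 0 = (∅ : Finset ℕ) from rfl, qbinom_out q (by omega)]
        rw [Finset.powersetCard_eq_empty.mpr (by simp), Finset.sum_empty]
    | N+1, m+1 =>
        rw [fS_rec, ih N (by omega) (m+1), ih N (by omega) m, ih (N-1) (by omega) m,
          gauss_rec q hq N m]


def eT (T : Finset ℕ) : Finset ℕ := T.image (fun c => 2*c) ∪ T.image (fun c => 2*c - 1)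

def dT (M : ℕ) (S : Finset ℕ) : Finset ℕ := (Finset.Icc 1 (M/2)).filter (fun c => 2*c ∈ S)

lemma mem_eT {T : Finset ℕ} {s : ℕ} : s ∈ eT T ↔ ∃ c ∈ T, s = 2*c ∨ s = 2*c - 1 := by
  simp only [eT, Finset.mem_union, Finset.mem_image]
  constructor
  · rintro (⟨c, hc, rfl⟩ | ⟨c, hc, rfl⟩)
    · exact ⟨c, hc, Or.inl rfl⟩
    · exact ⟨c, hc, Or.inr rfl⟩
  · rintro ⟨c, hc, rfl | rfl⟩
    · exact Or.inl ⟨c, hc, rfl⟩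
    · exact Or.inr ⟨c, hc, rfl⟩

lemma card_eT {T : Finset ℕ} (hT : ∀ c ∈ T, 1 ≤ c) : (eT T).card = 2 * T.card := by
  classical
  rw [eT, Finset.card_union_of_disjoint, Finset.card_image_of_injective _
      (fun a b h => by omega),
    Finset.card_image_of_injOn (fun a ha b hb h => by
      have := hT a ha; have := hT b hb; omega)]
  · omega
  · rw [Finset.disjoint_left]
    rintro x hx hx'
    obtain ⟨a, ha, rfl⟩ := Finset.mem_image.mp hx
    obtain ⟨b, hb, hba⟩ := Finset.mem_image.mp hx'
    have := hT b hb
    omega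

lemma subset_eT {M : ℕ} {T : Finset ℕ} (hT : T ⊆ Finset.Icc 1 (M/2)) :
    eT T ⊆ Finset.Icc 1 M := by
  intro s hs
  obtain ⟨c, hc, rfl | rfl⟩ := mem_eT.mp hs <;>
  · have := Finset.mem_Icc.mp (hT hc)
    rw [Finset.mem_Icc]
    omega

lemma good_eT {M : ℕ} {T : Finset ℕ} (hT : T ⊆ Finset.Icc 1 (M/2)) :
    goodSet M (eT T) := by
  have h1 : ∀ c ∈ T, 1 ≤ c := fun c hc => (Finset.mem_Icc.mp (hT hc)).1
  refine ⟨subset_eT hT, ?_, ?_⟩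
  · intro s hs hns
    obtain ⟨c, hc, rfl | rfl⟩ := mem_eT.mp hs
    · exact absurd (mem_eT.mpr ⟨c, hc, Or.inr rfl⟩) (by
        have := h1 c hc
        rw [show 2*c - 1 = 2*c - 1 from rfl]
        exact hns)
    · have := h1 c hc
      rw [Nat.odd_iff]; omega
  · intro s hs hns
    obtain ⟨c, hc, rfl | rfl⟩ := mem_eT.mp hs
    · rw [Nat.even_iff]; omega
    · have := h1 c hc
      exact absurd (mem_eT.mpr ⟨c, hc, Or.inl rfl⟩)
        (by rw [show 2*c = 2*c - 1 + 1 by omega] at hns ⊢; exact hns)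

lemma starts_eT {T : Finset ℕ} (h1 : ∀ c ∈ T, 1 ≤ c) :
    (eT T).filter (fun s => s - 1 ∉ eT T)
      = (T.filter (fun c => c - 1 ∉ T)).image (fun c => 2*c - 1) := by
  classical
  ext s
  simp only [Finset.mem_filter, Finset.mem_image]
  constructor
  · rintro ⟨hs, hns⟩
    obtain ⟨c, hc, rfl | rfl⟩ := mem_eT.mp hs
    · exact absurd (mem_eT.mpr ⟨c, hc, Or.inr rfl⟩) hns
    · have hc1 := h1 c hc
      refine ⟨c, ⟨hc, fun hc' => ?_⟩, rfl⟩
      have hc'1 := h1 _ hc'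
      exact hns (mem_eT.mpr ⟨c - 1, hc', Or.inl (by omega)⟩)
  · rintro ⟨c, ⟨hc, hc'⟩, rfl⟩
    have hc1 := h1 c hc
    refine ⟨mem_eT.mpr ⟨c, hc, Or.inr rfl⟩, fun hmem => ?_⟩
    obtain ⟨b, hb, hb'⟩ := mem_eT.mp hmem
    have hb1 := h1 b hb
    rcases hb' with hb' | hb'
    · have : b = c - 1 := by omega
      exact hc' (this ▸ hb)
    · omega

lemma wS_eT {T : Finset ℕ} (h1 : ∀ c ∈ T, 1 ≤ c) : wS (eT T) = T.card + 2 * vT T := by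
  classical
  rw [wS, card_eT h1, starts_eT h1, Finset.sum_image (fun a ha b hb h => by
    have := h1 a (Finset.mem_filter.mp ha).1
    have := h1 b (Finset.mem_filter.mp hb).1
    omega)]
  rw [vT, Finset.mul_sum]
  congr 1
  · omega
  · exact Finset.sum_congr rfl (fun c hc => by
      have := h1 c (Finset.mem_filter.mp hc).1; omega)

lemma dT_eT {M : ℕ} {T : Finset ℕ} (hT : T ⊆ Finset.Icc 1 (M/2)) : dT M (eT T) = T := by
  classical
  ext c
  simp only [dT, Finset.mem_filter]
  constructor
  · rintro ⟨hc, hc2⟩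
    obtain ⟨b, hb, hb'⟩ := mem_eT.mp hc2
    have := (Finset.mem_Icc.mp (hT hb)).1
    rcases hb' with hb' | hb'
    · have : c = b := by omega
      exact this ▸ hb
    · omega
  · intro hc
    exact ⟨hT hc, mem_eT.mpr ⟨c, hc, Or.inl rfl⟩⟩

lemma eT_dT {M : ℕ} {S : Finset ℕ} (h : goodSet M S) : eT (dT M S) = S := by
  classical
  obtain ⟨hsub, hstart, hend⟩ := h
  ext s
  simp only [mem_eT, dT, Finset.mem_filter, Finset.mem_Icc]
  constructor
  · rintro ⟨c, ⟨⟨hc1, hc2⟩, hcS⟩, rfl | rfl⟩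
    · exact hcS
    · by_contra hns
      have hodd := hstart (2*c) hcS (by rwa [show 2*c - 1 = 2*c - 1 from rfl])
      rw [Nat.odd_iff] at hodd
      omega
  · intro hs
    have hs1 := Finset.mem_Icc.mp (hsub hs)
    rcases Nat.even_or_odd s with he | ho
    · rw [Nat.even_iff] at he
      refine ⟨s / 2, ⟨⟨by omega, by omega⟩, by rwa [show 2*(s/2) = s by omega]⟩,
        Or.inl (by omega)⟩
    · rw [Nat.odd_iff] at ho
      have hs2 : s + 1 ∈ S := by
        by_contra hns
        have := hend s hs hns
        rw [Nat.even_iff] at this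
        omega
      have hs3 := Finset.mem_Icc.mp (hsub hs2)
      refine ⟨(s+1)/2, ⟨⟨by omega, by omega⟩, by rwa [show 2*((s+1)/2) = s + 1 by omega]⟩,
        Or.inr (by omega)⟩


lemma Xq_pow_sq_ne_one : ∀ i : ℕ, 1 ≤ i → (Xq ^ 2) ^ i ≠ 1 := by
  intro i hi h
  rw [← pow_mul, Xq, ← RatFunc.algebraMap_X (K := ℚ), ← map_pow] at h
  rw [show (1 : K) = algebraMap (Polynomial ℚ) K 1 from (map_one _).symm] at h
  have h' := RatFunc.algebraMap_injective (K := ℚ) h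
  have := congrArg Polynomial.natDegree h'
  simp [Polynomial.natDegree_X_pow] at this
  omega

open Classical in
/-- For `M ≥ 0` and `m ≥ 1`, `Σ_{S ∈ 𝒮(2m, M)} t^{w(S)} = t^m·[⌊M/2⌋ choose m]_{t²}`;
moreover `𝒮(k, M) = ∅` for odd `k` (every `S` with `goodSet M S` has even size). -/
theorem stmt19 (M m : ℕ) (hm : 1 ≤ m) :
    (∑ S ∈ (Finset.Icc 1 M).powerset.filter (fun S => goodSet M S ∧ S.card = 2 * m),
        Xq ^ wS S)
      = Xq ^ m * qbinomN (Xq ^ 2) (M / 2) m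
    ∧ ∀ S : Finset ℕ, goodSet M S → Even S.card := by
  classical
  have hone : ∀ S : Finset ℕ, ∀ c ∈ dT M S, 1 ≤ c :=
    fun S c hc => (Finset.mem_Icc.mp (Finset.mem_filter.mp hc).1).1
  have part2 : ∀ S : Finset ℕ, goodSet M S → Even S.card := by
    intro S hS
    have hc := card_eT (hone S)
    rw [eT_dT hS] at hc
    exact ⟨(dT M S).card, by omega⟩
  refine ⟨?_, part2⟩
  have hdT_mem : ∀ S ∈ (Finset.Icc 1 M).powerset.filter
      (fun S => goodSet M S ∧ S.card = 2 * m), dT M S ∈ (Finset.Icc 1 (M/2)).powersetCard m := by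
    intro S hS
    obtain ⟨hgood, hcard⟩ := (Finset.mem_filter.mp hS).2
    have hc := card_eT (hone S)
    rw [eT_dT hgood, hcard] at hc
    exact Finset.mem_powersetCard.mpr ⟨Finset.filter_subset _ _, by omega⟩
  have hsum : (∑ S ∈ (Finset.Icc 1 M).powerset.filter
        (fun S => goodSet M S ∧ S.card = 2 * m), Xq ^ wS S)
      = ∑ T ∈ (Finset.Icc 1 (M/2)).powersetCard m, Xq ^ (m + 2 * vT T) := by
    refine Finset.sum_nbij' (fun S => dT M S) (fun T => eT T) hdT_mem ?_ ?_ ?_ ?_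
    · intro T hT
      obtain ⟨hsub, hcard⟩ := Finset.mem_powersetCard.mp hT
      have h1 : ∀ c ∈ T, 1 ≤ c := fun c hc => (Finset.mem_Icc.mp (hsub hc)).1
      refine Finset.mem_filter.mpr ⟨Finset.mem_powerset.mpr (subset_eT hsub), good_eT hsub, ?_⟩
      rw [card_eT h1, hcard]
    · intro S hS
      exact eT_dT (Finset.mem_filter.mp hS).2.1
    · intro T hT
      exact dT_eT (Finset.mem_powersetCard.mp hT).1
    · intro S hS
      obtain ⟨hgood, hcard⟩ := (Finset.mem_filter.mp hS).2
      have hw := wS_eT (hone S)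
      rw [eT_dT hgood] at hw
      have hc := card_eT (hone S)
      rw [eT_dT hgood, hcard] at hc
      rw [hw, show (dT M S).card = m by omega]
  rw [hsum, ← fS_eq (Xq ^ 2) Xq_pow_sq_ne_one (M/2) m, fS, Finset.mul_sum]
  exact Finset.sum_congr rfl (fun T _ => by rw [pow_add, pow_mul])
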